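/- arXiv:2605.17096 — 6 statements merged into one kernel-verified Lean document; each statement's English description precedes it below -/
import Mathlib

section
/- Let $f : I \to \mathbb{R}$ and $g : J \to \mathbb{R}$ be $C^3$ functions on open intervals such that $u(x,y) = f(x) + g(y)$ satisfies $f'^2 + g'^2 < 1$ and solves $(1 - f'^2 - g'^2)(f'' + g'') + 4(f'^2 f'' + g'^2 g'') = 0$ on $I \times J$. Then $f$ and $g$ are both affine functions. -/
/-- If a function has zero derivative everywhere on an open convex set, it is constant there. -/
lemma const_of_deriv_zero_on {s : Set ℝ} (ho : IsOpen s) (hc : Convex ℝ s)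
    {F : ℝ → ℝ} (hd : ∀ x ∈ s, DifferentiableAt ℝ F x) (h0 : ∀ x ∈ s, deriv F x = 0)
    {x y : ℝ} (hx : x ∈ s) (hy : y ∈ s) : F x = F y := by
  refine hc.is_const_of_fderivWithin_eq_zero
    (fun z hz => (hd z hz).differentiableWithinAt) (fun z hz => ?_) hx hy
  rw [fderivWithin_of_isOpen ho hz, ← toSpanSingleton_deriv, h0 z hz]
  ext; simp

/-- A `C³` function with vanishing second derivative on an open convex set is affine. -/
lemma affine_of_deriv2_zero {s : Set ℝ} (ho : IsOpen s) (hc : Convex ℝ s) (hne : s.Nonempty)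
    {f : ℝ → ℝ} (hf : ContDiffOn ℝ 3 f s) (h : ∀ x ∈ s, deriv (deriv f) x = 0) :
    ∃ a b : ℝ, ∀ x ∈ s, f x = a * x + b := by
  obtain ⟨x₀, hx₀⟩ := hne
  have hF : ContDiffOn ℝ 2 (deriv f) s := hf.deriv_of_isOpen ho (by norm_num)
  have hFd : ∀ x ∈ s, DifferentiableAt ℝ (deriv f) x := fun x hx =>
    (hF.differentiableOn (by norm_num)).differentiableAt (ho.mem_nhds hx)
  have hfd : ∀ x ∈ s, DifferentiableAt ℝ f x := fun x hx =>
    (hf.differentiableOn (by norm_num)).differentiableAt (ho.mem_nhds hx)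
  have hconst : ∀ x ∈ s, deriv f x = deriv f x₀ := fun x hx =>
    const_of_deriv_zero_on ho hc hFd h hx hx₀
  refine ⟨deriv f x₀, f x₀ - deriv f x₀ * x₀, fun x hx => ?_⟩
  have key : (fun z => f z - deriv f x₀ * z) x = (fun z => f z - deriv f x₀ * z) x₀ := by
    apply const_of_deriv_zero_on ho hc
      (fun z hz => (hfd z hz).sub (by fun_prop)) _ hx hx₀
    intro z hz
    rw [deriv_sub (hfd z hz) (by fun_prop)]
    have : deriv (fun z : ℝ => deriv f x₀ * z) z = deriv f x₀ := by
      simpa using ((hasDerivAt_id z).const_mul (deriv f x₀)).deriv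
    rw [this, hconst z hz, sub_self]
  simp only at key
  linarith [key]

/-- A real quadratic vanishing at three distinct points has zero leading coefficients. -/
lemma quad_coeffs_zero {c₂ c₁ c₀ t₁ t₂ t₃ : ℝ} (h12 : t₁ ≠ t₂) (h13 : t₁ ≠ t₃) (h23 : t₂ ≠ t₃)
    (e1 : c₂ * t₁ ^ 2 + c₁ * t₁ + c₀ = 0) (e2 : c₂ * t₂ ^ 2 + c₁ * t₂ + c₀ = 0)
    (e3 : c₂ * t₃ ^ 2 + c₁ * t₃ + c₀ = 0) : c₂ = 0 ∧ c₁ = 0 := by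
  have d12 : (t₁ - t₂) * (c₂ * (t₁ + t₂) + c₁) = 0 := by linear_combination e1 - e2
  have d13 : (t₁ - t₃) * (c₂ * (t₁ + t₃) + c₁) = 0 := by linear_combination e1 - e3
  have s12 : c₂ * (t₁ + t₂) + c₁ = 0 := by
    rcases mul_eq_zero.mp d12 with h | h
    · exact absurd h (sub_ne_zero.mpr h12)
    · exact h
  have s13 : c₂ * (t₁ + t₃) + c₁ = 0 := by
    rcases mul_eq_zero.mp d13 with h | h
    · exact absurd h (sub_ne_zero.mpr h13)
    · exact h
  have hc2 : c₂ = 0 := by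
    have h : c₂ * (t₂ - t₃) = 0 := by linear_combination s12 - s13
    rcases mul_eq_zero.mp h with h | h
    · exact h
    · exact absurd h (sub_ne_zero.mpr h23)
  refine ⟨hc2, ?_⟩
  rw [hc2] at s12; linarith

/-- Separation of variables: if `u(x,y) = f(x) + g(y)` is a spacelike extremal
of the Lorentzian resistance functional on `I × J`, then `f` and `g` are affine. -/
theorem stmt_9 (I J : Set ℝ) (hIo : IsOpen I) (hJo : IsOpen J)
    (hIne : I.Nonempty) (hJne : J.Nonempty)
    (hIc : I.OrdConnected) (hJc : J.OrdConnected)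
    (f g : ℝ → ℝ) (hf : ContDiffOn ℝ 3 f I) (hg : ContDiffOn ℝ 3 g J)
    (hsp : ∀ x ∈ I, ∀ y ∈ J, (deriv f x) ^ 2 + (deriv g y) ^ 2 < 1)
    (heq : ∀ x ∈ I, ∀ y ∈ J,
      (1 - (deriv f x) ^ 2 - (deriv g y) ^ 2) * (deriv (deriv f) x + deriv (deriv g) y) +
        4 * ((deriv f x) ^ 2 * deriv (deriv f) x + (deriv g y) ^ 2 * deriv (deriv g) y) = 0) :
    (∃ a b : ℝ, ∀ x ∈ I, f x = a * x + b) ∧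
    (∃ a b : ℝ, ∀ y ∈ J, g y = a * y + b) := by
  have hIcx : Convex ℝ I := hIc.convex
  have hJcx : Convex ℝ J := hJc.convex
  have hgG : ContDiffOn ℝ 2 (deriv g) J := hg.deriv_of_isOpen hJo (by norm_num)
  have hGd : ∀ y ∈ J, DifferentiableAt ℝ (deriv g) y := fun y hy =>
    (hgG.differentiableOn (by norm_num)).differentiableAt (hJo.mem_nhds hy)
  have hfF : ContDiffOn ℝ 2 (deriv f) I := hf.deriv_of_isOpen hIo (by norm_num)
  have hFd : ∀ x ∈ I, DifferentiableAt ℝ (deriv f) x := fun x hx =>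
    (hfF.differentiableOn (by norm_num)).differentiableAt (hIo.mem_nhds hx)
  -- the PDE in separated form
  have hE : ∀ x ∈ I, ∀ y ∈ J,
      (1 + 3 * (deriv f x) ^ 2 - (deriv g y) ^ 2) * deriv (deriv f) x +
        (1 + 3 * (deriv g y) ^ 2 - (deriv f x) ^ 2) * deriv (deriv g) y = 0 := by
    intro x hx y hy
    linear_combination heq x hx y hy
  have hpos1 : ∀ x ∈ I, ∀ y ∈ J, 0 < 1 + 3 * (deriv f x) ^ 2 - (deriv g y) ^ 2 := by
    intro x hx y hy
    nlinarith [hsp x hx y hy, sq_nonneg (deriv f x)]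
  have hpos2 : ∀ x ∈ I, ∀ y ∈ J, 0 < 1 + 3 * (deriv g y) ^ 2 - (deriv f x) ^ 2 := by
    intro x hx y hy
    nlinarith [hsp x hx y hy, sq_nonneg (deriv g y)]
  by_cases hF0 : ∀ x ∈ I, deriv (deriv f) x = 0
  · -- then g'' vanishes too, both affine
    have hG0 : ∀ y ∈ J, deriv (deriv g) y = 0 := by
      intro y hy
      obtain ⟨x, hx⟩ := hIne
      have h1 := hE x hx y hy
      rw [hF0 x hx] at h1
      have h2 := hpos2 x hx y hy
      have h3 : (1 + 3 * (deriv g y) ^ 2 - (deriv f x) ^ 2) * deriv (deriv g) y = 0 := by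
        linarith
      rcases mul_eq_zero.mp h3 with h | h
      · linarith
      · exact h
    exact ⟨affine_of_deriv2_zero hIo hIcx hIne hf hF0,
           affine_of_deriv2_zero hJo hJcx hJne hg hG0⟩
  · exfalso
    push_neg at hF0
    obtain ⟨x₀, hx₀, hp⟩ := hF0
    -- g'' never vanishes on J
    have hG'ne : ∀ y ∈ J, deriv (deriv g) y ≠ 0 := by
      intro y hy h0
      have h1 := hE x₀ hx₀ y hy
      rw [h0] at h1
      have h2 := hpos1 x₀ hx₀ y hy
      have h3 : (1 + 3 * (deriv f x₀) ^ 2 - (deriv g y) ^ 2) * deriv (deriv f) x₀ = 0 := by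
        linarith
      rcases mul_eq_zero.mp h3 with h | h
      · linarith
      · exact hp h
    obtain ⟨y₀, hy₀⟩ := hJne
    -- two points of J with distinct (g')²
    have h2pts : ∃ y₁ ∈ J, ∃ y₂ ∈ J, (deriv g y₁) ^ 2 ≠ (deriv g y₂) ^ 2 := by
      by_contra hcon
      push_neg at hcon
      have hsq : ∀ y ∈ J, (deriv g y) ^ 2 = (deriv g y₀) ^ 2 := fun y hy =>
        hcon y hy y₀ hy₀
      have hGzero : ∀ y ∈ J, deriv g y = 0 := by
        intro y hy
        have hev : (fun z => (deriv g z) ^ 2) =ᶠ[nhds y] fun _ => (deriv g y₀) ^ 2 :=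
          Filter.eventuallyEq_of_mem (hJo.mem_nhds hy) fun z hz => hsq z hz
        have hd0 : deriv (fun z => (deriv g z) ^ 2) y = 0 := by
          rw [hev.deriv_eq]; simp
        have hder : deriv (fun z => (deriv g z) ^ 2) y
            = 2 * deriv g y * deriv (deriv g) y := by
          have h := ((hGd y hy).hasDerivAt.fun_pow 2).deriv
          simpa using h
        rw [hder] at hd0
        rcases mul_eq_zero.mp hd0 with h | h
        · rcases mul_eq_zero.mp h with h | h
          · norm_num at h
          · exact h
        · exact absurd h (hG'ne y hy)
      have hev : deriv g =ᶠ[nhds y₀] fun _ => (0 : ℝ) :=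
        Filter.eventuallyEq_of_mem (hJo.mem_nhds hy₀) fun z hz => hGzero z hz
      have : deriv (deriv g) y₀ = 0 := by rw [hev.deriv_eq]; simp
      exact hG'ne y₀ hy₀ this
    obtain ⟨y₁, hy₁, y₂, hy₂, ht12⟩ := h2pts
    -- third point via IVT
    have hGcont : ContinuousOn (fun y => (deriv g y) ^ 2) J :=
      ((hgG.differentiableOn (by norm_num)).continuousOn).pow 2
    have huIcc : Set.uIcc y₁ y₂ ⊆ J := hJc.uIcc_subset hy₁ hy₂
    have hmid : ((deriv g y₁) ^ 2 + (deriv g y₂) ^ 2) / 2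
        ∈ Set.uIcc ((deriv g y₁) ^ 2) ((deriv g y₂) ^ 2) := by
      rcases le_total ((deriv g y₁) ^ 2) ((deriv g y₂) ^ 2) with h | h
      · rw [Set.uIcc_of_le h]; constructor <;> linarith
      · rw [Set.uIcc_of_ge h]; constructor <;> linarith
    obtain ⟨y₃, hy₃mem, hy₃eq⟩ := intermediate_value_uIcc (hGcont.mono huIcc) hmid
    have hy₃ : y₃ ∈ J := huIcc hy₃mem
    simp only at hy₃eq
    have ht13 : (deriv g y₁) ^ 2 ≠ (deriv g y₃) ^ 2 := by
      intro h; exact ht12 (by linarith [h, hy₃eq])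
    have ht23 : (deriv g y₂) ^ 2 ≠ (deriv g y₃) ^ 2 := by
      intro h; exact ht12 (by linarith [h, hy₃eq])
    -- for every x in I, f'' x = f'' x₀ and (f' x)² = (f' x₀)²
    have key : ∀ x ∈ I,
        deriv (deriv f) x = deriv (deriv f) x₀ ∧ (deriv f x) ^ 2 = (deriv f x₀) ^ 2 := by
      intro x hx
      have cross : ∀ y ∈ J,
          (3 * (deriv (deriv f) x₀ - deriv (deriv f) x)) * ((deriv g y) ^ 2) ^ 2 +
          (deriv (deriv f) x * (2 + 9 * (deriv f x) ^ 2 + (deriv f x₀) ^ 2)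
            - deriv (deriv f) x₀ * (2 + 9 * (deriv f x₀) ^ 2 + (deriv f x) ^ 2)) *
            ((deriv g y) ^ 2) +
          (deriv (deriv f) x * (1 + 3 * (deriv f x) ^ 2) * (1 - (deriv f x₀) ^ 2)
            - deriv (deriv f) x₀ * (1 + 3 * (deriv f x₀) ^ 2) * (1 - (deriv f x) ^ 2)) = 0 := by
        intro y hy
        linear_combination (1 + 3 * (deriv g y) ^ 2 - (deriv f x₀) ^ 2) * hE x hx y hy -
          (1 + 3 * (deriv g y) ^ 2 - (deriv f x) ^ 2) * hE x₀ hx₀ y hy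
      obtain ⟨hc2, hc1⟩ := quad_coeffs_zero ht12 ht13 ht23
        (cross y₁ hy₁) (cross y₂ hy₂) (cross y₃ hy₃)
      have hq : deriv (deriv f) x = deriv (deriv f) x₀ := by linarith
      refine ⟨hq, ?_⟩
      rw [hq] at hc1
      have h8 : deriv (deriv f) x₀ * (8 * ((deriv f x) ^ 2 - (deriv f x₀) ^ 2)) = 0 := by
        linear_combination hc1
      rcases mul_eq_zero.mp h8 with h | h
      · exact absurd h hp
      · linarith
    -- (f')² is constant on I, its derivative at x₀ is 0, giving f' x₀ = 0
    have hevF : (fun z => (deriv f z) ^ 2) =ᶠ[nhds x₀] fun _ => (deriv f x₀) ^ 2 :=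
      Filter.eventuallyEq_of_mem (hIo.mem_nhds hx₀) fun z hz => (key z hz).2
    have hd0 : deriv (fun z => (deriv f z) ^ 2) x₀ = 0 := by
      rw [hevF.deriv_eq]; simp
    have hder : deriv (fun z => (deriv f z) ^ 2) x₀
        = 2 * deriv f x₀ * deriv (deriv f) x₀ := by
      have h := ((hFd x₀ hx₀).hasDerivAt.fun_pow 2).deriv
      simpa using h
    rw [hder] at hd0
    have hFx₀ : deriv f x₀ = 0 := by
      rcases mul_eq_zero.mp hd0 with h | h
      · rcases mul_eq_zero.mp h with h | h
        · norm_num at h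
        · exact h
      · exact absurd h hp
    -- so f' ≡ 0 on I, hence f'' x₀ = 0: contradiction
    have hF0' : ∀ x ∈ I, deriv f x = 0 := by
      intro x hx
      have h := (key x hx).2
      rw [hFx₀] at h
      have := pow_eq_zero_iff (n := 2) (by norm_num) |>.mp (by linarith [h] : (deriv f x) ^ 2 = 0)
      exact this
    have hev2 : deriv f =ᶠ[nhds x₀] fun _ => (0 : ℝ) :=
      Filter.eventuallyEq_of_mem (hIo.mem_nhds hx₀) fun z hz => hF0' z hz
    exact hp (by rw [hev2.deriv_eq]; simp)
end

section
/- Fix $R > 0$ and $0 < M < R$. For $n \in \mathbb{N}$, let $a_n = M + \frac{R-M}{n}$ and define $u_n(r) = \frac{M}{a_n} r$ for $0 \le r \le a_n$ and $u_n(r) = M$ for $a_n \le r \le R$. Then each $u_n$ is spacelike ($|u_n'| < 1$), $0 \le u_n \le M$, and $E[u_n] = \frac{\pi a_n^4}{a_n^2 - M^2} \to \infty$ as $n \to \infty$. Consequently, the supremum of $E$ over $\{u \in \mathcal{C}(B_R) : 0 \le u \le M\}$ is infinite. -/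
open Real Filter Set intervalIntegral Topology

/-- The spacelike cones `u_n` of slope `M/a_n` have resistance
`π a_n⁴/(a_n² - M²) → ∞`; consequently the supremum of the resistance over
spacelike functions with `0 ≤ u ≤ M` on `B_R` is infinite. -/
theorem stmt_11 (R M : ℝ) (hM : 0 < M) (hMR : M < R)
    (a : ℕ → ℝ) (ha : ∀ n : ℕ, a n = M + (R - M) / n)
    (u : ℕ → ℝ → ℝ)
    (hu : ∀ n : ℕ, u n = fun r => if r ≤ a n then (M / a n) * r else M) :
    (∀ n : ℕ, 1 ≤ n → |M / a n| < 1) ∧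
    (∀ n : ℕ, 1 ≤ n → ∀ r ∈ Set.Icc (0 : ℝ) R, 0 ≤ u n r ∧ u n r ≤ M) ∧
    (∀ n : ℕ, 1 ≤ n →
      2 * π * ∫ r in (0 : ℝ)..(a n), r / (1 - (M / a n) ^ 2)
        = π * (a n) ^ 4 / ((a n) ^ 2 - M ^ 2)) ∧
    Tendsto (fun n : ℕ => π * (a n) ^ 4 / ((a n) ^ 2 - M ^ 2)) atTop atTop ∧
    (∀ C : ℝ, ∃ (v d : ℝ → ℝ) (b : ℝ),
      (∀ r ∈ Set.Icc (0 : ℝ) R, 0 ≤ v r ∧ v r ≤ M) ∧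
      (∀ r : ℝ, |d r| < 1) ∧
      (∀ r ∈ Set.Ioo (0 : ℝ) R, r ≠ b → HasDerivAt v (d r) r) ∧
      C < 2 * π * ∫ r in (0 : ℝ)..R, r / (1 - (d r) ^ 2)) := by
  -- Basic facts about `a n` for `n ≥ 1`.
  have hMa : ∀ n : ℕ, 1 ≤ n → M < a n := by
    intro n hn
    rw [ha n]
    have hn' : (1 : ℝ) ≤ n := by exact_mod_cast hn
    have : 0 < (R - M) / n := div_pos (by linarith) (by linarith)
    linarith
  have haR : ∀ n : ℕ, 1 ≤ n → a n ≤ R := by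
    intro n hn
    rw [ha n]
    have hn' : (1 : ℝ) ≤ n := by exact_mod_cast hn
    have : (R - M) / n ≤ R - M := by
      apply div_le_self (by linarith) hn'
    linarith
  have hapos : ∀ n : ℕ, 1 ≤ n → 0 < a n := fun n hn => lt_trans hM (hMa n hn)
  have hslope : ∀ n : ℕ, 1 ≤ n → |M / a n| < 1 := by
    intro n hn
    have h1 := hMa n hn
    have h2 := hapos n hn
    rw [abs_of_pos (div_pos hM h2)]
    rw [div_lt_one h2]
    exact h1
  have hbound : ∀ n : ℕ, 1 ≤ n → ∀ r ∈ Set.Icc (0 : ℝ) R, 0 ≤ u n r ∧ u n r ≤ M := by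
    intro n hn r hr
    rw [hu n]
    simp only
    by_cases hra : r ≤ a n
    · rw [if_pos hra]
      constructor
      · exact mul_nonneg (le_of_lt (div_pos hM (hapos n hn))) hr.1
      · calc (M / a n) * r ≤ (M / a n) * a n :=
              mul_le_mul_of_nonneg_left hra (le_of_lt (div_pos hM (hapos n hn)))
          _ = M := div_mul_cancel₀ M (ne_of_gt (hapos n hn))
    · rw [if_neg hra]
      exact ⟨le_of_lt hM, le_refl M⟩
  -- squares
  have hsq : ∀ n : ℕ, 1 ≤ n → 0 < (a n) ^ 2 - M ^ 2 := by
    intro n hn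
    have h1 := hMa n hn
    nlinarith [hM]
  have hone : ∀ n : ℕ, 1 ≤ n → 0 < 1 - (M / a n) ^ 2 := by
    intro n hn
    have := hslope n hn
    nlinarith [abs_nonneg (M / a n), sq_abs (M / a n), this]
  -- the energy computation
  have henergy : ∀ n : ℕ, 1 ≤ n →
      2 * π * ∫ r in (0 : ℝ)..(a n), r / (1 - (M / a n) ^ 2)
        = π * (a n) ^ 4 / ((a n) ^ 2 - M ^ 2) := by
    intro n hn
    rw [intervalIntegral.integral_div, integral_id]
    have h0 : a n ≠ 0 := ne_of_gt (hapos n hn)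
    have h1 : (a n) ^ 2 - M ^ 2 ≠ 0 := ne_of_gt (hsq n hn)
    have h2 : 1 - (M / a n) ^ 2 ≠ 0 := ne_of_gt (hone n hn)
    field_simp
    ring
  -- the limit
  have htendA : Tendsto a atTop (𝓝 M) := by
    have : Tendsto (fun n : ℕ => M + (R - M) / n) atTop (𝓝 (M + 0)) :=
      (tendsto_const_nhds).add (tendsto_const_div_atTop_nhds_zero_nat (R - M))
    rw [add_zero] at this
    exact this.congr fun n => (ha n).symm
  have htend : Tendsto (fun n : ℕ => π * (a n) ^ 4 / ((a n) ^ 2 - M ^ 2)) atTop atTop := by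
    have hnum : Tendsto (fun n : ℕ => π * (a n) ^ 4) atTop (𝓝 (π * M ^ 4)) :=
      tendsto_const_nhds.mul (htendA.pow 4)
    have hden : Tendsto (fun n : ℕ => (a n) ^ 2 - M ^ 2) atTop (𝓝[>] 0) := by
      rw [tendsto_nhdsWithin_iff]
      constructor
      · have : Tendsto (fun n : ℕ => (a n) ^ 2 - M ^ 2) atTop (𝓝 (M ^ 2 - M ^ 2)) :=
          (htendA.pow 2).sub tendsto_const_nhds
        simpa using this
      · filter_upwards [eventually_ge_atTop 1] with n hn
        exact hsq n hn
    have hinv : Tendsto (fun n : ℕ => ((a n) ^ 2 - M ^ 2)⁻¹) atTop atTop :=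
      tendsto_inv_nhdsGT_zero.comp hden
    have hpos : 0 < π * M ^ 4 := by positivity
    have := Filter.Tendsto.pos_mul_atTop hpos hnum hinv
    exact this.congr fun n => by rw [div_eq_mul_inv]
  refine ⟨hslope, hbound, henergy, htend, ?_⟩
  -- the supremum statement
  intro C
  obtain ⟨n, hn1, hnC⟩ : ∃ n : ℕ, 1 ≤ n ∧ C < π * (a n) ^ 4 / ((a n) ^ 2 - M ^ 2) := by
    have h := (htend.eventually_gt_atTop C).and (eventually_ge_atTop 1)
    obtain ⟨n, hn⟩ := h.exists
    exact ⟨n, hn.2, hn.1⟩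
  set A := a n with hA
  have hA0 : 0 < A := hapos n hn1
  have hAM : M < A := hMa n hn1
  have hAR : A ≤ R := haR n hn1
  have hone' : 0 < 1 - (M / A) ^ 2 := hone n hn1
  refine ⟨u n, fun r => if r < A then M / A else 0, A, hbound n hn1, ?_, ?_, ?_⟩
  · intro r
    by_cases h : r < A
    · simpa [h] using hslope n hn1
    · simp [h]
  · intro r hr hrA
    rcases lt_or_gt_of_ne hrA with h | h
    · have hmem : Iio A ∈ 𝓝 r := Iio_mem_nhds h
      have heq : u n =ᶠ[𝓝 r] fun x => (M / A) * x := by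
        filter_upwards [hmem] with x hx
        rw [hu n]
        simp only
        rw [if_pos (le_of_lt hx)]
      have hd : HasDerivAt (fun x => (M / A) * x) (M / A) r := by
        simpa using (hasDerivAt_id r).const_mul (M / A)
      have : HasDerivAt (u n) (M / A) r := hd.congr_of_eventuallyEq heq
      simpa [h] using this
    · have hmem : Ioi A ∈ 𝓝 r := Ioi_mem_nhds h
      have heq : u n =ᶠ[𝓝 r] fun _ => M := by
        filter_upwards [hmem] with x hx
        rw [hu n]
        simp only
        rw [if_neg (not_le.mpr hx)]
      have : HasDerivAt (u n) 0 r := (hasDerivAt_const r M).congr_of_eventuallyEq heq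
      simpa [not_lt_of_gt h] using this
  · -- the integral estimate
    set d : ℝ → ℝ := fun r => if r < A then M / A else 0 with hd
    have hae : ∀ᵐ x : ℝ, x ≠ A := by
      rw [MeasureTheory.ae_iff]
      simp only [not_ne_iff]
      have : {x : ℝ | x = A} = {A} := by ext x; simp
      rw [this]
      exact Real.volume_singleton
    -- first piece
    have h1 : ∫ r in (0 : ℝ)..A, r / (1 - (d r) ^ 2)
        = ∫ r in (0 : ℝ)..A, r / (1 - (M / A) ^ 2) := by
      apply intervalIntegral.integral_congr_ae
      filter_upwards [hae] with x hx hxmem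
      rw [uIoc_of_le (le_of_lt hA0)] at hxmem
      have : x < A := lt_of_le_of_ne hxmem.2 hx
      simp [hd, this]
    have h2 : ∫ r in A..R, r / (1 - (d r) ^ 2) = ∫ r in A..R, r := by
      apply intervalIntegral.integral_congr
      intro x hx
      rw [uIcc_of_le hAR] at hx
      have : ¬ x < A := not_lt.mpr hx.1
      simp [hd, this]
    have hint1 : IntervalIntegrable (fun r => r / (1 - (d r) ^ 2)) MeasureTheory.volume 0 A := by
      apply IntervalIntegrable.congr_ae (f := fun r : ℝ => r / (1 - (M / A) ^ 2))
      · exact (continuous_id.div_const _).intervalIntegrable 0 A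
      · rw [Filter.EventuallyEq, MeasureTheory.ae_restrict_iff' measurableSet_uIoc]
        filter_upwards [hae] with x hx hxmem
        rw [uIoc_of_le (le_of_lt hA0)] at hxmem
        have hlt : x < A := lt_of_le_of_ne hxmem.2 hx
        simp [hd, hlt]
    have hint2 : IntervalIntegrable (fun r => r / (1 - (d r) ^ 2)) MeasureTheory.volume A R := by
      apply IntervalIntegrable.congr_ae (f := fun r : ℝ => r)
      · exact continuous_id.intervalIntegrable A R
      · rw [Filter.EventuallyEq, MeasureTheory.ae_restrict_iff' measurableSet_uIoc]
        filter_upwards with x hxmem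
        rw [uIoc_of_le hAR] at hxmem
        have : ¬ x < A := not_lt.mpr (le_of_lt hxmem.1)
        simp [hd, this]
    have hen := henergy n hn1
    rw [← hA] at hen
    have hcalc : 2 * π * ∫ r in (0 : ℝ)..R, r / (1 - (d r) ^ 2)
        = π * A ^ 4 / (A ^ 2 - M ^ 2) + π * (R ^ 2 - A ^ 2) := by
      rw [← intervalIntegral.integral_add_adjacent_intervals hint1 hint2, h1, h2,
        integral_id, mul_add, hen]
      ring
    rw [hcalc]
    have hR2 : 0 ≤ π * (R ^ 2 - A ^ 2) := by
      apply mul_nonneg pi_pos.le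
      nlinarith [hA0, hAR]
    linarith
end

section
/- Fix $R > 0$ and $0 < M < R$. For $n \in \mathbb{N}$, let $a_n = M + \frac{R-M}{n}$ and $\rho_n = \frac{a_n^2 - M^2}{2M}$, and define $u_n(r) = -\rho_n + \sqrt{\rho_n^2 + r^2}$ for $0 \le r \le a_n$, $u_n(r) = M$ for $a_n \le r \le R$. Then $u_n(a_n) = M$, $0 \le u_n \le M$, $|u_n'| < 1$, the resistance over $[0, a_n]$ equals $\frac{\pi a_n^2}{2\rho_n^2}(a_n^2 + 2\rho_n^2)$, and $E[u_n] \to \infty$ as $n \to \infty$. -/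
open Real Filter Set intervalIntegral Topology

/-- Truncated hyperbolic caps with `ρ_n → 0` have resistance tending to `∞`. -/
theorem stmt_12 (R M : ℝ) (hM : 0 < M) (hMR : M < R)
    (a ρ : ℕ → ℝ) (ha : ∀ n : ℕ, a n = M + (R - M) / n)
    (hρ : ∀ n : ℕ, ρ n = ((a n) ^ 2 - M ^ 2) / (2 * M))
    (u d : ℕ → ℝ → ℝ)
    (hu : ∀ n : ℕ, u n = fun r =>
      if r ≤ a n then -ρ n + Real.sqrt ((ρ n) ^ 2 + r ^ 2) else M)
    (hd : ∀ n : ℕ, d n = fun r =>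
      if r < a n then r / Real.sqrt ((ρ n) ^ 2 + r ^ 2) else 0) :
    (∀ n : ℕ, 1 ≤ n → u n (a n) = M) ∧
    (∀ n : ℕ, 1 ≤ n → ∀ r ∈ Set.Icc (0 : ℝ) R, 0 ≤ u n r ∧ u n r ≤ M) ∧
    (∀ n : ℕ, 1 ≤ n → ∀ r : ℝ, |d n r| < 1) ∧
    (∀ n : ℕ, 1 ≤ n →
      2 * π * ∫ r in (0 : ℝ)..(a n), r / (1 - (d n r) ^ 2)
        = π * (a n) ^ 2 / (2 * (ρ n) ^ 2) * ((a n) ^ 2 + 2 * (ρ n) ^ 2)) ∧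
    Tendsto (fun n : ℕ => 2 * π * ∫ r in (0 : ℝ)..R, r / (1 - (d n r) ^ 2))
      atTop atTop := by
  have key : ∀ n : ℕ, 1 ≤ n →
      M < a n ∧ a n ≤ R ∧ 0 < ρ n ∧ (a n) ^ 2 = M ^ 2 + 2 * ρ n * M := by
    intro n hn
    have hn' : (1 : ℝ) ≤ (n : ℝ) := by exact_mod_cast hn
    have hn0 : (0 : ℝ) < n := by linarith
    have h1 : M < a n := by
      rw [ha]
      have : 0 < (R - M) / n := div_pos (by linarith) hn0
      linarith
    have h2 : a n ≤ R := by
      rw [ha]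
      have : (R - M) / n ≤ R - M := div_le_self (by linarith) hn'
      linarith
    have h3 : 0 < ρ n := by
      rw [hρ]
      have : M ^ 2 < (a n) ^ 2 := by nlinarith
      exact div_pos (by linarith) (by linarith)
    have h4 : (a n) ^ 2 = M ^ 2 + 2 * ρ n * M := by
      rw [hρ]; field_simp; ring
    exact ⟨h1, h2, h3, h4⟩
  -- pointwise formula for the integrand
  have pieq : ∀ n : ℕ, 1 ≤ n → ∀ r : ℝ,
      r / (1 - (d n r) ^ 2) = if r < a n then r + r ^ 3 / (ρ n) ^ 2 else r := by
    intro n hn r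
    obtain ⟨h1, h2, h3, h4⟩ := key n hn
    rw [hd]
    by_cases hra : r < a n
    · simp only [if_pos hra]
      have hpos : 0 < (ρ n) ^ 2 + r ^ 2 := by positivity
      rw [div_pow, Real.sq_sqrt hpos.le]
      have hρ0 : (ρ n) ≠ 0 := h3.ne'
      field_simp
      ring
    · simp only [if_neg hra]; norm_num
  have part1 : ∀ n : ℕ, 1 ≤ n → u n (a n) = M := by
    intro n hn
    obtain ⟨h1, h2, h3, h4⟩ := key n hn
    rw [hu]
    simp only [le_refl, if_pos]
    have hsq : (ρ n) ^ 2 + (a n) ^ 2 = (ρ n + M) ^ 2 := by rw [h4]; ring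
    rw [hsq, Real.sqrt_sq (by linarith)]
    ring
  have part2 : ∀ n : ℕ, 1 ≤ n → ∀ r ∈ Set.Icc (0 : ℝ) R, 0 ≤ u n r ∧ u n r ≤ M := by
    intro n hn r hr
    obtain ⟨h1, h2, h3, h4⟩ := key n hn
    rw [hu]
    by_cases hra : r ≤ a n
    · simp only [if_pos hra]
      have hs1 : ρ n ≤ Real.sqrt ((ρ n) ^ 2 + r ^ 2) := by
        have h := Real.sqrt_le_sqrt (show (ρ n) ^ 2 ≤ (ρ n) ^ 2 + r ^ 2 by nlinarith)
        rwa [Real.sqrt_sq h3.le] at h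
      have hs2 : Real.sqrt ((ρ n) ^ 2 + r ^ 2) ≤ ρ n + M := by
        have hr2 : (ρ n) ^ 2 + r ^ 2 ≤ (ρ n + M) ^ 2 := by nlinarith [hr.1]
        calc Real.sqrt ((ρ n) ^ 2 + r ^ 2) ≤ Real.sqrt ((ρ n + M) ^ 2) :=
              Real.sqrt_le_sqrt hr2
          _ = ρ n + M := Real.sqrt_sq (by linarith)
      constructor <;> linarith
    · simp only [if_neg hra]; exact ⟨hM.le, le_rfl⟩
  have part3 : ∀ n : ℕ, 1 ≤ n → ∀ r : ℝ, |d n r| < 1 := by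
    intro n hn r
    obtain ⟨h1, h2, h3, h4⟩ := key n hn
    rw [hd]
    by_cases hra : r < a n
    · simp only [if_pos hra]
      have hpos : 0 < (ρ n) ^ 2 + r ^ 2 := by positivity
      have hs : 0 < Real.sqrt ((ρ n) ^ 2 + r ^ 2) := Real.sqrt_pos.mpr hpos
      rw [abs_div, abs_of_pos hs, div_lt_one hs, ← Real.sqrt_sq_eq_abs]
      exact Real.sqrt_lt_sqrt (by positivity) (by nlinarith)
    · simp only [if_neg hra]; norm_num
  -- value of the integral over [0, a n]
  have int1 : ∀ n : ℕ, 1 ≤ n →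
      ∫ r in (0 : ℝ)..(a n), r / (1 - (d n r) ^ 2)
        = (a n) ^ 2 / 2 + (a n) ^ 4 / (4 * (ρ n) ^ 2) := by
    intro n hn
    obtain ⟨h1, h2, h3, h4⟩ := key n hn
    have hA : ∀ᵐ x : ℝ, x ≠ a n := by
      rw [MeasureTheory.ae_iff]
      simp
    have hcong : ∫ r in (0 : ℝ)..(a n), r / (1 - (d n r) ^ 2)
        = ∫ r in (0 : ℝ)..(a n), (r + r ^ 3 / (ρ n) ^ 2) := by
      apply intervalIntegral.integral_congr_ae
      filter_upwards [hA] with x hx hmem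
      rw [Set.uIoc_of_le (by linarith : (0:ℝ) ≤ a n)] at hmem
      rw [pieq n hn x, if_pos (lt_of_le_of_ne hmem.2 hx)]
    have hint2 : IntervalIntegrable (fun r : ℝ => r ^ 3 / (ρ n) ^ 2) MeasureTheory.volume 0 (a n) :=
      ((continuous_pow 3).div_const _).intervalIntegrable _ _
    rw [hcong, intervalIntegral.integral_add (intervalIntegral.intervalIntegrable_id) hint2,
      integral_id, intervalIntegral.integral_div, integral_pow]
    have hρ0 : (ρ n) ≠ 0 := h3.ne'
    field_simp
    ring
  have part4 : ∀ n : ℕ, 1 ≤ n →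
      2 * π * ∫ r in (0 : ℝ)..(a n), r / (1 - (d n r) ^ 2)
        = π * (a n) ^ 2 / (2 * (ρ n) ^ 2) * ((a n) ^ 2 + 2 * (ρ n) ^ 2) := by
    intro n hn
    obtain ⟨h1, h2, h3, h4⟩ := key n hn
    rw [int1 n hn]
    have hρ0 : (ρ n) ≠ 0 := h3.ne'
    field_simp
    ring
  refine ⟨part1, part2, part3, part4, ?_⟩
  -- the full integral over [0, R]
  have intR : ∀ n : ℕ, 1 ≤ n →
      ∫ r in (0 : ℝ)..R, r / (1 - (d n r) ^ 2)
        = (a n) ^ 2 / 2 + (a n) ^ 4 / (4 * (ρ n) ^ 2) + (R ^ 2 - (a n) ^ 2) / 2 := by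
    intro n hn
    obtain ⟨h1, h2, h3, h4⟩ := key n hn
    have hA : ∀ᵐ x : ℝ, x ≠ a n := by
      rw [MeasureTheory.ae_iff]
      simp
    have hi1 : IntervalIntegrable (fun r => r / (1 - (d n r) ^ 2))
        MeasureTheory.volume 0 (a n) := by
      rw [intervalIntegrable_iff_integrableOn_Ioc_of_le (by linarith)]
      have hg : MeasureTheory.IntegrableOn (fun r : ℝ => r + r ^ 3 / (ρ n) ^ 2)
          (Set.Ioc 0 (a n)) := by
        apply Continuous.integrableOn_Ioc
        exact continuous_id.add ((continuous_pow 3).div_const _)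
      apply hg.congr
      apply (MeasureTheory.ae_restrict_iff' measurableSet_Ioc).mpr
      filter_upwards [hA] with x hx hmem
      rw [pieq n hn x, if_pos (lt_of_le_of_ne hmem.2 hx)]
    have hi2 : IntervalIntegrable (fun r => r / (1 - (d n r) ^ 2))
        MeasureTheory.volume (a n) R := by
      rw [intervalIntegrable_iff_integrableOn_Ioc_of_le h2]
      have hg : MeasureTheory.IntegrableOn (fun r : ℝ => r) (Set.Ioc (a n) R) :=
        Continuous.integrableOn_Ioc continuous_id
      apply hg.congr
      apply (MeasureTheory.ae_restrict_iff' measurableSet_Ioc).mpr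
      filter_upwards with x hmem
      rw [pieq n hn x, if_neg (not_lt.mpr hmem.1.le)]
    rw [← intervalIntegral.integral_add_adjacent_intervals hi1 hi2, int1 n hn]
    have htail : ∫ r in (a n)..R, r / (1 - (d n r) ^ 2) = ∫ r in (a n)..R, r := by
      apply intervalIntegral.integral_congr
      intro x hx
      rw [Set.uIcc_of_le h2] at hx
      show x / (1 - d n x ^ 2) = x
      rw [pieq n hn x, if_neg (not_lt.mpr hx.1)]
    rw [htail, integral_id]
  -- limits
  have ta : Tendsto a atTop (𝓝 M) := by
    have h := (tendsto_const_nhds (x := M)).add (tendsto_const_div_atTop_nhds_zero_nat (R - M))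
    rw [add_zero] at h
    exact h.congr fun n => (ha n).symm
  have tρ : Tendsto ρ atTop (𝓝 0) := by
    have h : Tendsto (fun n => ((a n) ^ 2 - M ^ 2) / (2 * M)) atTop (𝓝 ((M ^ 2 - M ^ 2) / (2 * M))) := by
      exact (((ta.pow 2).sub tendsto_const_nhds).div_const _)
    rw [sub_self, zero_div] at h
    exact h.congr fun n => (hρ n).symm
  have tρ2 : Tendsto (fun n => 2 * (ρ n) ^ 2) atTop (𝓝[>] 0) := by
    rw [tendsto_nhdsWithin_iff]
    constructor
    · have h := ((tρ.pow 2).const_mul 2)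
      simpa using h
    · filter_upwards [eventually_ge_atTop 1] with n hn
      have h3 := (key n hn).2.2.1
      exact Set.mem_Ioi.mpr (by positivity)
  have tinv : Tendsto (fun n => (2 * (ρ n) ^ 2)⁻¹) atTop atTop :=
    tendsto_inv_nhdsGT_zero.comp tρ2
  have tmul : Tendsto (fun n => (a n) ^ 4 * (2 * (ρ n) ^ 2)⁻¹) atTop atTop :=
    Filter.Tendsto.pos_mul_atTop (by positivity : (0:ℝ) < M ^ 4) (ta.pow 4) tinv
  have tfin : Tendsto (fun n => π * R ^ 2 + π * ((a n) ^ 4 * (2 * (ρ n) ^ 2)⁻¹)) atTop atTop := by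
    apply tendsto_atTop_add_const_left
    exact Filter.Tendsto.const_mul_atTop Real.pi_pos tmul
  apply tfin.congr'
  filter_upwards [eventually_ge_atTop 1] with n hn
  obtain ⟨h1, h2, h3, h4⟩ := key n hn
  rw [intR n hn]
  have hρ0 : (ρ n) ≠ 0 := h3.ne'
  field_simp
  ring
end

section
/- The function $g : (0,1) \to \mathbb{R}$, $g(x) = \frac{x}{(1-x^2)^2}\left(\frac{1}{4} - \log x - x^2 + \frac{3x^4}{4}\right)$, is strictly increasing, with $\lim_{x \to 0^+} g(x) = 0$ and $\lim_{x \to 1^-} g(x) = 1$. Consequently, for every $q \in (0,1)$ there is a unique $x \in (0,1)$ with $g(x) = q$. -/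
open Real Filter Set

lemma log_lb {t : ℝ} (ht : t ∈ Set.Ioo (0:ℝ) 1) :
    (1 - t) + (1 - t)^2/2 < -Real.log t := by
  obtain ⟨ht0, ht1⟩ := ht
  set F : ℝ → ℝ := fun t => -Real.log t - (1 - t) - (1 - t)^2/2 with hF
  have hder : ∀ s ∈ Set.Ioo (0:ℝ) 1, HasDerivAt F (-((1-s)^2/s)) s := by
    intro s hs
    have hs0 : s ≠ 0 := hs.1.ne'
    have h' := (((Real.hasDerivAt_log hs0).neg.sub
      ((hasDerivAt_id s).const_sub 1)).sub
      ((((hasDerivAt_id s).const_sub 1).pow 2).div_const 2))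
    refine h'.congr_deriv ?_
    simp only [id, Pi.add_apply, Pi.sub_apply, Pi.mul_apply, Pi.div_apply, Pi.pow_apply, Pi.neg_apply]
    field_simp
    ring
  have hanti : StrictAntiOn F (Set.Ioc 0 1) := by
    apply strictAntiOn_of_deriv_neg (convex_Ioc 0 1)
    · intro s hs
      have hs0 : s ≠ 0 := ne_of_gt hs.1
      have : ContinuousAt F s := by fun_prop (disch := assumption)
      exact this.continuousWithinAt
    · rw [interior_Ioc]
      intro s hs
      rw [(hder s hs).deriv]
      have : 0 < (1-s)^2/s := div_pos (pow_pos (by linarith [hs.2]) 2) hs.1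
      linarith
  have := hanti ⟨ht0, ht1.le⟩ ⟨zero_lt_one, le_refl 1⟩ ht1
  simp only [hF, Real.log_one] at this
  linarith

lemma log_ub {t : ℝ} (ht : t ∈ Set.Ioo (0:ℝ) 1) :
    -Real.log t ≤ (1 - t)*(1 + t)/(2*t) := by
  obtain ⟨ht0, ht1⟩ := ht
  set G : ℝ → ℝ := fun t => (1 - t)*(1 + t)/(2*t) + Real.log t with hG
  have hder : ∀ s ∈ Set.Ioo (0:ℝ) 1, HasDerivAt G (-((1-s)^2/(2*s^2))) s := by
    intro s hs
    have hs0 : s ≠ 0 := hs.1.ne'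
    have h2s : (2*s) ≠ 0 := by have := hs.1; positivity
    have h' := ((((hasDerivAt_id s).const_sub 1).mul ((hasDerivAt_id s).const_add 1)).div
      ((hasDerivAt_id s).const_mul 2) h2s).add (Real.hasDerivAt_log hs0)
    refine h'.congr_deriv ?_
    simp only [id, Pi.add_apply, Pi.sub_apply, Pi.mul_apply, Pi.div_apply, Pi.pow_apply, Pi.neg_apply]
    field_simp
    ring
  have hanti : AntitoneOn G (Set.Ioc 0 1) := by
    apply antitoneOn_of_deriv_nonpos (convex_Ioc 0 1)
    · intro s hs
      have hs0 : s ≠ 0 := ne_of_gt hs.1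
      have h2s : (2*s) ≠ 0 := by have := hs.1; positivity
      have : ContinuousAt G s := by fun_prop (disch := assumption)
      exact this.continuousWithinAt
    · rw [interior_Ioc]
      intro s hs
      exact ((hder s hs).differentiableAt.differentiableWithinAt)
    · rw [interior_Ioc]
      intro s hs
      rw [(hder s hs).deriv]
      have hs1 := hs.1
      have : 0 ≤ (1-s)^2/(2*s^2) := by positivity
      linarith
  have := hanti ⟨ht0, ht1.le⟩ ⟨zero_lt_one, le_refl 1⟩ ht1.le
  simp only [hG, Real.log_one] at this
  linarith

lemma g_deriv {x : ℝ} (hx : x ∈ Set.Ioo (0:ℝ) 1) :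
    HasDerivAt (fun x : ℝ => x / (1 - x ^ 2) ^ 2 *
      (1 / 4 - Real.log x - x ^ 2 + 3 * x ^ 4 / 4))
      ((1 + 3*x^2) * (-Real.log x - (1-x^2)/2 - (1-x^2)^2/4) / (1-x^2)^3) x := by
  have hx0 : x ≠ 0 := hx.1.ne'
  have hx2 : (1:ℝ) - x^2 ≠ 0 := by nlinarith [hx.1, hx.2]
  have hden : ((1:ℝ) - x^2)^2 ≠ 0 := pow_ne_zero 2 hx2
  have hU := (hasDerivAt_id x).div (((hasDerivAt_pow 2 x).const_sub 1).pow 2) hden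
  have hA := (((hasDerivAt_const x (1/4:ℝ)).sub (Real.hasDerivAt_log hx0)).sub
    (hasDerivAt_pow 2 x)).add (((hasDerivAt_pow 4 x).const_mul 3).div_const 4)
  have h' := hU.mul hA
  refine h'.congr_deriv ?_
  simp only [id, Pi.add_apply, Pi.sub_apply, Pi.mul_apply, Pi.div_apply, Pi.pow_apply, Pi.neg_apply]
  field_simp
  ring

/-- The function `g(x) = x/(1-x²)² (1/4 - log x - x² + 3x⁴/4)` is strictly
increasing on `(0,1)` with limits `0` at `0⁺` and `1` at `1⁻`, so every
`q ∈ (0,1)` is attained exactly once. -/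
theorem stmt_14 (g : ℝ → ℝ)
    (hg : g = fun x => x / (1 - x ^ 2) ^ 2 *
      (1 / 4 - Real.log x - x ^ 2 + 3 * x ^ 4 / 4)) :
    StrictMonoOn g (Set.Ioo 0 1) ∧
    Tendsto g (nhdsWithin 0 (Set.Ioi 0)) (nhds 0) ∧
    Tendsto g (nhdsWithin 1 (Set.Iio 1)) (nhds 1) ∧
    (∀ q ∈ Set.Ioo (0 : ℝ) 1, ∃! x, x ∈ Set.Ioo (0 : ℝ) 1 ∧ g x = q) := by
  have hcont : ContinuousOn g (Set.Ioo 0 1) := by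
    rw [hg]; exact fun x hx => (g_deriv hx).continuousAt.continuousWithinAt
  -- strict monotonicity
  have hmono : StrictMonoOn g (Set.Ioo 0 1) := by
    apply strictMonoOn_of_deriv_pos (convex_Ioo 0 1) hcont
    rw [interior_Ioo]
    intro x hx
    rw [hg, (g_deriv hx).deriv]
    have hx2 : x^2 ∈ Set.Ioo (0:ℝ) 1 := ⟨pow_pos hx.1 2, by nlinarith [hx.1, hx.2]⟩
    have hL := log_lb hx2
    rw [show Real.log (x^2) = 2 * Real.log x by
      rw [Real.log_pow]; norm_num] at hL
    have hLpos : 0 < -Real.log x - (1-x^2)/2 - (1-x^2)^2/4 := by nlinarith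
    have h1 : (0:ℝ) < 1 + 3*x^2 := by positivity
    have h2 : (0:ℝ) < (1-x^2)^3 := by
      have : (0:ℝ) < 1 - x^2 := by nlinarith [hx.1, hx.2]
      positivity
    positivity
  have hIoo0 : Set.Ioo (0:ℝ) 1 ∈ nhdsWithin (0:ℝ) (Set.Ioi 0) :=
    Ioo_mem_nhdsGT_of_mem ⟨le_refl 0, zero_lt_one⟩
  have hIoo1 : Set.Ioo (0:ℝ) 1 ∈ nhdsWithin (1:ℝ) (Set.Iio 1) :=
    Ioo_mem_nhdsLT_of_mem ⟨zero_lt_one, le_refl 1⟩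
  -- limit at 0
  have h0 : Tendsto g (nhdsWithin 0 (Set.Ioi 0)) (nhds 0) := by
    set F : ℝ → ℝ := fun x => (x * Real.log x) * (-(1/(1-x^2)^2)) +
      x * (1/4 - x^2 + 3*x^4/4) / (1-x^2)^2 with hF
    have hc1 : ContinuousAt (fun x : ℝ => -(1/(1-x^2)^2)) 0 := by
      fun_prop (disch := norm_num)
    have hc2 : ContinuousAt (fun x : ℝ => x * (1/4 - x^2 + 3*x^4/4) / (1-x^2)^2) 0 := by
      fun_prop (disch := norm_num)
    have hFc : ContinuousAt F 0 :=
      ((Real.continuous_mul_log.continuousAt).mul hc1).add hc2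
    have hF0 : F 0 = 0 := by simp [hF]
    have hFt : Tendsto F (nhdsWithin 0 (Set.Ioi 0)) (nhds 0) := by
      have h := (hFc.continuousWithinAt (s := Set.Ioi 0)).tendsto
      rwa [hF0] at h
    apply hFt.congr'
    filter_upwards [hIoo0] with x hx
    have hx0 : x ≠ 0 := hx.1.ne'
    have hx2 : (1:ℝ) - x^2 ≠ 0 := by nlinarith [hx.1, hx.2]
    rw [hg]
    simp only [hF]
    field_simp
    ring
  -- bounds for squeeze at 1
  have hbound : ∀ x ∈ Set.Ioo (0:ℝ) 1, x ≤ g x ∧ g x ≤ 3*x/4 + 1/(4*x) := by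
    intro x hx
    have hx0 : (0:ℝ) < x := hx.1
    have hx1 : (0:ℝ) < 1 - x^2 := by nlinarith [hx.2]
    have hx2 : x^2 ∈ Set.Ioo (0:ℝ) 1 := ⟨pow_pos hx.1 2, by nlinarith [hx.2]⟩
    have hlogpow : Real.log (x^2) = 2 * Real.log x := by
      rw [Real.log_pow]; norm_num
    have hL := log_lb hx2
    rw [hlogpow] at hL
    have hU := log_ub hx2
    rw [hlogpow] at hU
    have h2x2 : (0:ℝ) < 2*x^2 := by positivity
    have hU2 : -(2*Real.log x) * (2*x^2) ≤ (1-x^2)*(1+x^2) :=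
      (le_div_iff₀ h2x2).mp hU
    constructor
    · have key : (1-x^2)^2 ≤ 1/4 - Real.log x - x^2 + 3*x^4/4 := by nlinarith
      calc x = x/(1-x^2)^2 * (1-x^2)^2 := by field_simp
        _ ≤ g x := by
            rw [hg]
            exact mul_le_mul_of_nonneg_left key (by positivity)
    · have key2 : 1/4 - Real.log x - x^2 + 3*x^4/4 ≤ (3*x^2+1)*(1-x^2)^2/(4*x^2) := by
        rw [le_div_iff₀ (by positivity : (0:ℝ) < 4*x^2)]
        nlinarith
      calc g x ≤ x/(1-x^2)^2 * ((3*x^2+1)*(1-x^2)^2/(4*x^2)) := by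
            rw [hg]
            exact mul_le_mul_of_nonneg_left key2 (by positivity)
        _ = 3*x/4 + 1/(4*x) := by field_simp
  -- limit at 1
  have h1 : Tendsto g (nhdsWithin 1 (Set.Iio 1)) (nhds 1) := by
    have hlow : Tendsto (fun x : ℝ => x) (nhdsWithin 1 (Set.Iio 1)) (nhds 1) :=
      tendsto_id.mono_left nhdsWithin_le_nhds
    have hup : Tendsto (fun x : ℝ => 3*x/4 + 1/(4*x)) (nhdsWithin 1 (Set.Iio 1)) (nhds 1) := by
      have hc : ContinuousAt (fun x : ℝ => 3*x/4 + 1/(4*x)) 1 := by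
        fun_prop (disch := norm_num)
      have h := (hc.continuousWithinAt (s := Set.Iio 1)).tendsto
      have he : (3*(1:ℝ)/4 + 1/(4*1)) = 1 := by norm_num
      rwa [he] at h
    refine tendsto_of_tendsto_of_tendsto_of_le_of_le' hlow hup ?_ ?_
    · filter_upwards [hIoo1] with x hx using (hbound x hx).1
    · filter_upwards [hIoo1] with x hx using (hbound x hx).2
  refine ⟨hmono, h0, h1, ?_⟩
  intro q hq
  have ha := ((h0.eventually (eventually_lt_nhds hq.1)).and
    (eventually_of_mem hIoo0 (fun x hx => hx))).exists
  obtain ⟨a, haq, haI⟩ := ha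
  have hb := ((h1.eventually (eventually_gt_nhds hq.2)).and
    (eventually_of_mem hIoo1 (fun x hx => hx))).exists
  obtain ⟨b, hbq, hbI⟩ := hb
  have hab : a < b := by
    by_contra h
    push_neg at h
    have := hmono.monotoneOn hbI haI h
    linarith
  have hsub : Set.Icc a b ⊆ Set.Ioo 0 1 := fun y hy => ⟨lt_of_lt_of_le haI.1 hy.1,
    lt_of_le_of_lt hy.2 hbI.2⟩
  have hIVT := intermediate_value_Icc hab.le (hcont.mono hsub)
  have hqmem : q ∈ Set.Icc (g a) (g b) := ⟨haq.le, hbq.le⟩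
  obtain ⟨x, hxI, hxq⟩ := hIVT hqmem
  refine ⟨x, ⟨hsub hxI, hxq⟩, ?_⟩
  intro y ⟨hyI, hyq⟩
  exact hmono.injOn hyI (hsub hxI) (by rw [hyq, hxq])
end

section
/- For the Lagrangian $F(r,u,p) = \frac{r}{1-p^2}$, the Weierstrass excess function satisfies, for all $r > 0$ and $a, b \in (-1, 1)$: $\mathcal{E}(r, u, a, b) := F(r,u,b) - F(r,u,a) - (b - a)F_p(r,u,a) = \frac{r (a - b)^2 ((a+b)^2 + (1 - b^2))}{(1-a^2)^2 (1-b^2)} \ge 0$, with equality if and only if $a = b$. -/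
/-- The Weierstrass excess function of `F(r,u,p) = r/(1-p²)` is nonnegative on
the spacelike region, vanishing only on the diagonal. -/
theorem stmt_17 (r a b : ℝ) (hr : 0 < r)
    (ha : a ∈ Set.Ioo (-1 : ℝ) 1) (hb : b ∈ Set.Ioo (-1 : ℝ) 1) :
    r / (1 - b ^ 2) - r / (1 - a ^ 2) - (b - a) * (2 * r * a / (1 - a ^ 2) ^ 2)
      = r * (a - b) ^ 2 * ((a + b) ^ 2 + (1 - b ^ 2)) / ((1 - a ^ 2) ^ 2 * (1 - b ^ 2)) ∧
    0 ≤ r * (a - b) ^ 2 * ((a + b) ^ 2 + (1 - b ^ 2)) / ((1 - a ^ 2) ^ 2 * (1 - b ^ 2)) ∧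
    (r * (a - b) ^ 2 * ((a + b) ^ 2 + (1 - b ^ 2)) / ((1 - a ^ 2) ^ 2 * (1 - b ^ 2)) = 0
      ↔ a = b) := by
  obtain ⟨ha1, ha2⟩ := ha
  obtain ⟨hb1, hb2⟩ := hb
  have hA : (0:ℝ) < 1 - a ^ 2 := by nlinarith
  have hB : (0:ℝ) < 1 - b ^ 2 := by nlinarith
  have hden : (0:ℝ) < (1 - a ^ 2) ^ 2 * (1 - b ^ 2) := by positivity
  have hnum : 0 ≤ (a + b) ^ 2 + (1 - b ^ 2) := by positivity
  refine ⟨?_, by positivity, ?_⟩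
  · field_simp
    ring
  · constructor
    · intro h
      rw [div_eq_zero_iff] at h
      rcases h with h | h
      · by_contra hab
        have h1 : (a - b) ^ 2 > 0 := by have := sub_ne_zero.mpr hab; positivity
        have h2 : 0 < (a + b) ^ 2 + (1 - b ^ 2) := by nlinarith [sq_nonneg (a + b)]
        nlinarith [mul_pos (mul_pos hr h1) h2]
      · linarith
    · intro h
      subst h
      simp
end

section
/- Let $u : I \to \mathbb{R}$ be a $C^1$ function on an interval with $u'(x)^2 < 1$ for all $x$. Then for all $x \in I$ and $t > 0$ with $x - t u'(x) \in I$, the single shock condition holds: $\frac{u(x) - u(x - t u'(x))}{t} \le \frac{1 + u'(x)^2}{2}$. -/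
/-- Every spacelike `C¹` function on an interval satisfies the single shock
condition: `(u(x) - u(x - t u'(x)))/t ≤ (1 + u'(x)²)/2` for all `t > 0`. -/
theorem stmt_18 (I : Set ℝ) (hI : I.OrdConnected)
    (u d : ℝ → ℝ)
    (hderiv : ∀ x ∈ I, HasDerivAt u (d x) x)
    (hcont : ContinuousOn d I)
    (hsp : ∀ x ∈ I, (d x) ^ 2 < 1) :
    ∀ x ∈ I, ∀ t : ℝ, 0 < t → x - t * d x ∈ I →
      (u x - u (x - t * d x)) / t ≤ (1 + (d x) ^ 2) / 2 := by
  intro x hx t ht hy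
  set y := x - t * d x with hydef
  have hsub : Set.uIcc x y ⊆ I := Set.OrdConnected.uIcc_subset hI hx hy
  rw [div_le_div_iff₀ ht two_pos]
  rcases lt_trichotomy (d x) 0 with h | h | h
  · -- d x < 0, so x < y
    have hlt : x < y := by
      have : 0 < -(t * d x) := by nlinarith
      simp only [hydef]; linarith
    have hIcc : Set.Icc x y ⊆ I := by
      intro z hz; exact hsub (by rw [Set.uIcc_of_le hlt.le]; exact hz)
    obtain ⟨c, hc, hcd⟩ := exists_hasDerivAt_eq_slope u d hlt
      (fun z hz => ((hderiv z (hIcc hz)).continuousAt).continuousWithinAt)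
      (fun z hz => hderiv z (hIcc ⟨hz.1.le, hz.2.le⟩))
    have hcI : c ∈ I := hIcc ⟨hc.1.le, hc.2.le⟩
    have hc2 := hsp c hcI
    have hne : y - x ≠ 0 := by linarith [hc.1, hc.2]
    have heq : u y - u x = d c * (y - x) := by
      field_simp at hcd; linarith [hcd]
    have hyx : y - x = -(t * d x) := by rw [hydef]; ring
    rw [hyx] at heq
    nlinarith [mul_nonneg ht.le (sq_nonneg (d x - d c)), mul_pos ht (by nlinarith : (0:ℝ) < 1 - d c ^ 2)]
  · simp [hydef, h]
    positivity
  · -- d x > 0, so y < x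
    have hlt : y < x := by
      have : 0 < t * d x := by positivity
      simp only [hydef]; linarith
    have hIcc : Set.Icc y x ⊆ I := by
      intro z hz; exact hsub (by rw [Set.uIcc_of_ge hlt.le]; exact hz)
    obtain ⟨c, hc, hcd⟩ := exists_hasDerivAt_eq_slope u d hlt
      (fun z hz => ((hderiv z (hIcc hz)).continuousAt).continuousWithinAt)
      (fun z hz => hderiv z (hIcc ⟨hz.1.le, hz.2.le⟩))
    have hcI : c ∈ I := hIcc ⟨hc.1.le, hc.2.le⟩
    have hc2 := hsp c hcI
    have hne : x - y ≠ 0 := by linarith [hc.1, hc.2]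
    have heq : u x - u y = d c * (x - y) := by
      field_simp at hcd; linarith [hcd]
    have hyx : x - y = t * d x := by simp [hydef]
    rw [hyx] at heq
    nlinarith [mul_nonneg ht.le (sq_nonneg (d x - d c)), mul_pos ht (by nlinarith : (0:ℝ) < 1 - d c ^ 2)]
end
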